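/- For the immersion ψ(x) = ((1 − √3 x)/2, (1 + √3 x)/2) of S² into S³×S³, the almost product structure P maps tangent planes of the image to g-orthogonal planes: g(P dψ(v), dψ(w)) = 0 for all tangent vectors v, w to S² at x. -/

import Mathlib

/-! With `a = p q⁻¹` a unit quaternion, the vectors `P dψ(v)`, `J P dψ(v)` and `J dψ(w)` are
built from left multiplications of `v`, `w` by `a` and `a⁻¹ = ā`. Left multiplication by a unit
quaternion is an isometry and `⟨a v, w⟩ + ⟨ā v, w⟩ = 2 Re(a) ⟨v, w⟩`, which gives
`g(P dψ(v), dψ(w)) = -(2 Re(a) + 1) ⟨v, w⟩`. At `(p, q) = ψ(x)` we have `x² = -1`, and then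
`p q⁻¹ = -q` is a unit with real part `-1/2`. -/

open Quaternion

noncomputable section

/-- The almost complex structure `J` at the point `(p, q)` of `S³ × S³`,
acting on `T_p S³ × T_q S³ ⊆ ℍ × ℍ`:
`J(U,V) = (1/√3)(2pq⁻¹V − U, −2qp⁻¹U + V)`. -/
def Jmap (p q : ℍ[ℝ]) (W : ℍ[ℝ] × ℍ[ℝ]) : ℍ[ℝ] × ℍ[ℝ] :=
  (Real.sqrt 3)⁻¹ •
    ((2 : ℝ) • (p * q⁻¹ * W.2) - W.1, -((2 : ℝ) • (q * p⁻¹ * W.1)) + W.2)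

/-- The almost product structure `P` at `(p, q)`: `P(U,V) = (pq⁻¹V, qp⁻¹U)`. -/
def Pmap (p q : ℍ[ℝ]) (W : ℍ[ℝ] × ℍ[ℝ]) : ℍ[ℝ] × ℍ[ℝ] :=
  (p * q⁻¹ * W.2, q * p⁻¹ * W.1)

/-- The product round metric on `S³ × S³` (on tangent pairs). -/
def prodInner (X Y : ℍ[ℝ] × ℍ[ℝ]) : ℝ :=
  (inner ℝ X.1 Y.1 : ℝ) + (inner ℝ X.2 Y.2 : ℝ)

/-- The nearly Kähler metric `g(X,Y) = (1/2)(⟨X,Y⟩ + ⟨JX,JY⟩)` at `(p,q)`. -/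
def gmet (p q : ℍ[ℝ]) (X Y : ℍ[ℝ] × ℍ[ℝ]) : ℝ :=
  (1 / 2) * (prodInner X Y + prodInner (Jmap p q X) (Jmap p q Y))

/-- The differential of `ψ(x) = ((1 − √3 x)/2, (1 + √3 x)/2)` applied to a
tangent vector `v` of `S²` at `x`. -/
def dpsi (v : ℍ[ℝ]) : ℍ[ℝ] × ℍ[ℝ] :=
  ((-(Real.sqrt 3 / 2)) • v, (Real.sqrt 3 / 2) • v)

namespace Quaternion

theorem re_mul_comm {R : Type*} [CommRing R] (a b : ℍ[R]) : (a * b).re = (b * a).re := by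
  rw [re_mul, re_mul]; ring

theorem inner_mul_left_eq_inner_star_mul (a u w : ℍ[ℝ]) :
    inner ℝ (a * u) w = inner ℝ u (star a * w) := by
  rw [inner_def, inner_def, star_mul, star_star, mul_assoc, re_mul_comm, mul_assoc]

theorem inner_mul_mul_left (a u w : ℍ[ℝ]) :
    inner ℝ (a * u) (a * w) = normSq a * inner ℝ u w := by
  rw [inner_mul_left_eq_inner_star_mul, ← mul_assoc, star_mul_self, coe_mul_eq_smul,
    real_inner_smul_right]

theorem inner_mul_add_inner_star_mul (a u w : ℍ[ℝ]) :
    inner ℝ (a * u) w + inner ℝ (star a * u) w = 2 * a.re * inner ℝ u w := by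
  rw [← inner_add_left, ← add_mul, self_add_star, ← real_inner_smul_left, ← coe_mul_eq_smul]
  push_cast; rfl

theorem inv_eq_star_of_norm_eq_one {a : ℍ[ℝ]} (ha : ‖a‖ = 1) : a⁻¹ = star a := by
  rw [inv_def, normSq_eq_norm_mul_self, ha]; simp

end Quaternion

section

variable (p q v : ℍ[ℝ])

theorem Pmap_dpsi :
    Pmap p q (dpsi v) = (Real.sqrt 3 / 2) • (p * q⁻¹ * v, -((p * q⁻¹)⁻¹ * v)) := by
  rw [Pmap, dpsi, ← inv_inv q, ← mul_inv_rev, inv_inv]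
  simp only [mul_smul_comm, mul_neg, Prod.smul_mk, neg_smul, smul_neg]

theorem Jmap_dpsi : Jmap p q (dpsi v) =
    (p * q⁻¹ * v + (1 / 2 : ℝ) • v, (p * q⁻¹)⁻¹ * v + (1 / 2 : ℝ) • v) := by
  rw [Jmap, dpsi, ← inv_inv q, ← mul_inv_rev, inv_inv]
  simp only [mul_smul_comm, Prod.smul_mk]
  ext1 <;> dsimp only <;> match_scalars <;> field_simp

theorem Jmap_Pmap_dpsi (h : p * q⁻¹ ≠ 0) : Jmap p q (Pmap p q (dpsi v)) =
    (-v - (1 / 2 : ℝ) • (p * q⁻¹ * v), -v - (1 / 2 : ℝ) • ((p * q⁻¹)⁻¹ * v)) := by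
  rw [Pmap_dpsi, Jmap, ← inv_inv q, ← mul_inv_rev, inv_inv]
  simp only [mul_smul_comm, Prod.smul_mk, mul_neg, ← mul_assoc, mul_inv_cancel₀ h,
    inv_mul_cancel₀ h, one_mul]
  ext1 <;> dsimp only <;> match_scalars <;> field_simp

end

theorem gmet_Pmap_dpsi {p q : ℍ[ℝ]} (h : ‖p * q⁻¹‖ = 1) (v w : ℍ[ℝ]) :
    gmet p q (Pmap p q (dpsi v)) (dpsi w) = -(2 * (p * q⁻¹).re + 1) * inner ℝ v w := by
  have h0 : p * q⁻¹ ≠ 0 := norm_ne_zero_iff.mp (h ▸ one_ne_zero)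
  rw [gmet, Jmap_Pmap_dpsi _ _ _ h0, Jmap_dpsi, Pmap_dpsi, inv_eq_star_of_norm_eq_one h]
  set a := p * q⁻¹
  have hN : normSq a = 1 := by rw [normSq_eq_norm_mul_self, h, one_mul]
  have hadj : inner ℝ v (a * w) = inner ℝ (star a * v) w := by
    rw [inner_mul_left_eq_inner_star_mul, star_star]
  have hadj_star : inner ℝ v (star a * w) = inner ℝ (a * v) w :=
    (inner_mul_left_eq_inner_star_mul a v w).symm
  have hsum := inner_mul_add_inner_star_mul a v w
  have h3 : Real.sqrt 3 * Real.sqrt 3 = 3 := Real.mul_self_sqrt (by norm_num)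
  simp only [prodInner, dpsi, Prod.smul_mk, inner_add_right, inner_sub_left, inner_neg_left,
    real_inner_smul_left, real_inner_smul_right, inner_mul_mul_left, normSq_star, hN, one_mul,
    hadj, hadj_star]
  linear_combination (-(inner ℝ (a * v) w + inner ℝ (star a * v) w) / 8) * h3 - hsum

def psi (x : ℍ[ℝ]) : ℍ[ℝ] × ℍ[ℝ] :=
  ((1 / 2 : ℝ) • (1 - Real.sqrt 3 • x), (1 / 2 : ℝ) • (1 + Real.sqrt 3 • x))

section psi

variable {x : ℍ[ℝ]}

theorem mul_self_eq_neg_one_of_re_eq_zero (hx : x.re = 0) (hx1 : ‖x‖ = 1) : x * x = -1 := by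
  rw [← sq, sq_eq_neg_normSq.mpr hx, normSq_eq_norm_mul_self, hx1, mul_one, coe_one]

theorem psi_snd_mul_psi_fst (hx : x * x = -1) : (psi x).2 * (psi x).1 = 1 := by
  have h3 : Real.sqrt 3 * Real.sqrt 3 = 3 := Real.mul_self_sqrt (by norm_num)
  simp only [psi, smul_mul_smul_comm, add_mul, mul_sub, one_mul, mul_one, hx, h3]
  module

theorem psi_fst_mul_self (hx : x * x = -1) : (psi x).1 * (psi x).1 = -(psi x).2 := by
  have h3 : Real.sqrt 3 * Real.sqrt 3 = 3 := Real.mul_self_sqrt (by norm_num)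
  simp only [psi, smul_mul_smul_comm, sub_mul, mul_sub, one_mul, mul_one, hx, h3]
  module

theorem psi_fst_mul_inv_psi_snd (hx : x * x = -1) : (psi x).1 * (psi x).2⁻¹ = -(psi x).2 := by
  rw [inv_eq_of_mul_eq_one_right (psi_snd_mul_psi_fst hx), psi_fst_mul_self hx]

theorem star_psi_snd (hx : x.re = 0) : star (psi x).2 = (psi x).1 := by
  simp only [psi, Quaternion.star_smul, star_add, star_one, star_eq_neg.mpr hx, smul_neg,
    sub_eq_add_neg]

theorem norm_psi_snd (hx : x.re = 0) (hx1 : ‖x‖ = 1) : ‖(psi x).2‖ = 1 := by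
  refine (pow_eq_one_iff_of_nonneg (norm_nonneg _) two_ne_zero).mp ?_
  rw [sq]
  nth_rewrite 2 [← _root_.norm_star]
  rw [star_psi_snd hx, ← norm_mul,
    psi_snd_mul_psi_fst (mul_self_eq_neg_one_of_re_eq_zero hx hx1), norm_one]

theorem re_psi_snd (hx : x.re = 0) : (psi x).2.re = 1 / 2 := by
  simp [psi, hx]

end psi

theorem stmt_15_general (x v w : ℍ[ℝ]) (hx : x.re = 0) (hx1 : ‖x‖ = 1) :
    gmet ((1 / 2 : ℝ) • (1 - Real.sqrt 3 • x)) ((1 / 2 : ℝ) • (1 + Real.sqrt 3 • x))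
        (Pmap ((1 / 2 : ℝ) • (1 - Real.sqrt 3 • x)) ((1 / 2 : ℝ) • (1 + Real.sqrt 3 • x))
          (dpsi v))
        (dpsi w) = 0 := by
  have ha := psi_fst_mul_inv_psi_snd (mul_self_eq_neg_one_of_re_eq_zero hx hx1)
  have hg := gmet_Pmap_dpsi (by rw [ha, norm_neg, norm_psi_snd hx hx1]) v w
  rw [ha, re_neg, re_psi_snd hx] at hg
  exact hg.trans (by norm_num)

/-- for `ψ(x) = ((1 − √3 x)/2, (1 + √3 x)/2)` on the sphere of
unit imaginary quaternions, `P` maps tangent planes of the image to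
`g`-orthogonal planes: `g(P dψ(v), dψ(w)) = 0`. -/
theorem stmt_15 (x v w : ℍ[ℝ]) (hx : x.re = 0) (hx1 : ‖x‖ = 1)
    (hv : v.re = 0) (hvx : (inner ℝ v x : ℝ) = 0)
    (hw : w.re = 0) (hwx : (inner ℝ w x : ℝ) = 0) :
    gmet ((1 / 2 : ℝ) • (1 - Real.sqrt 3 • x)) ((1 / 2 : ℝ) • (1 + Real.sqrt 3 • x))
        (Pmap ((1 / 2 : ℝ) • (1 - Real.sqrt 3 • x)) ((1 / 2 : ℝ) • (1 + Real.sqrt 3 • x))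
          (dpsi v))
        (dpsi w) = 0 :=
  stmt_15_general x v w hx hx1
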